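/- The n-dimensional kernel Φ(τ,Y,a,B) satisfies Φ(τ,Y,a,B) ≤ (4πτ)^{-n/2}·det(Θ/sinh Θ)^{1/2}·exp{-(1/(8τ))·Y(Θ(cosh Θ + 1)/sinh Θ)Yᵀ} for all Y ∈ ℝⁿ, a ∈ ℝⁿ, n×n matrices B, and τ > 0. -/

import Mathlib

open Real Matrix

/-- Apply a scalar function spectrally, via an orthogonal diagonalization. -/
noncomputable def matFun {n : ℕ} (U : Matrix (Fin n) (Fin n) ℝ) (d : Fin n → ℝ)
    (f : ℝ → ℝ) : Matrix (Fin n) (Fin n) ℝ :=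
  U * Matrix.diagonal (fun i => f (d i)) * Uᵀ

/-- `x / sinh x`, extended by its limit `1` at `x = 0`. -/
noncomputable def xDivSinh (x : ℝ) : ℝ := if x = 0 then 1 else x / Real.sinh x

/-- `x cosh x / sinh x`, extended by its limit `1` at `x = 0`. -/
noncomputable def xCoshDivSinh (x : ℝ) : ℝ :=
  if x = 0 then 1 else x * Real.cosh x / Real.sinh x

/-- `(cosh x - 1)/(x sinh x)`, extended by its limit `1/2` at `x = 0`. -/
noncomputable def coshSubOneDivXSinh (x : ℝ) : ℝ :=
  if x = 0 then 1 / 2 else (Real.cosh x - 1) / (x * Real.sinh x)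

/-- `x (cosh x + 1) / sinh x`, extended by its limit `2` at `x = 0`. -/
noncomputable def xCoshAddOneDivSinh (x : ℝ) : ℝ :=
  if x = 0 then 2 else x * (Real.cosh x + 1) / Real.sinh x

/-! Write `Θ = √(4τ²BBᵀ)`, `Θ♯ = √(4τ²BᵀB)` and `h x = (cosh x - 1)/(x sinh x) ≥ 0`.
Since `x coth x = ½ x (cosh x + 1)/sinh x + ½ x² h x`, the bound reduces to the nonnegativity of
`Y·Θ²h(Θ)Y + 16τ² Y·h(Θ)Ba + 16τ² a·h(Θ♯)a`. Interpolating a spectral function by a polynomial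
in `x²` shows `f(Θ) B = B f(Θ♯)`, so with `z = BᵀY` and `Θ² = 4τ²BBᵀ` this form equals
`4τ² (z + 2a)·h(Θ♯)(z + 2a)`. -/

open Polynomial

theorem SemiconjBy.aeval {R A : Type*} [CommSemiring R] [Semiring A] [Algebra R A]
    {a x y : A} (h : SemiconjBy a x y) (P : R[X]) :
    SemiconjBy a (aeval x P) (aeval y P) := by
  induction P using Polynomial.induction_on with
  | C r =>
    rw [aeval_C, aeval_C]
    exact (Algebra.commutes r a).symm
  | add p q hp hq => simpa only [map_add] using hp.add_right hq
  | monomial k r _ =>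
    simpa only [map_mul, map_pow, aeval_C, aeval_X] using
      SemiconjBy.mul_right (Algebra.commutes r a).symm (h.pow_right (k + 1))

section MatFun

variable {m : ℕ} (U : Matrix (Fin m) (Fin m) ℝ) (d : Fin m → ℝ)

theorem matFun_congr {F G : ℝ → ℝ} (h : ∀ i, F (d i) = G (d i)) :
    matFun U d F = matFun U d G := by
  simp only [matFun, h]

theorem transpose_matFun (F : ℝ → ℝ) : (matFun U d F)ᵀ = matFun U d F := by
  simp only [matFun, transpose_mul, transpose_transpose, diagonal_transpose, Matrix.mul_assoc]

theorem matFun_add (F G : ℝ → ℝ) :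
    matFun U d (fun x => F x + G x) = matFun U d F + matFun U d G := by
  simp only [matFun, ← diagonal_add, Matrix.mul_add, Matrix.add_mul]

theorem matFun_const_mul (c : ℝ) (F : ℝ → ℝ) :
    matFun U d (fun x => c * F x) = c • matFun U d F := by
  have hdiag : (diagonal fun i => c * F (d i)) = c • diagonal fun i => F (d i) :=
    diagonal_smul c _
  rw [matFun, matFun, hdiag, Matrix.mul_smul, Matrix.smul_mul]

theorem matFun_const (hU : U * Uᵀ = 1) (c : ℝ) : matFun U d (fun _ => c) = algebraMap ℝ _ c := by
  rw [matFun, show (diagonal fun _ : Fin m => c) = algebraMap ℝ _ c from rfl,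
    ← Algebra.commutes, Matrix.mul_assoc, hU, Matrix.mul_one]

theorem matFun_mul (hU : Uᵀ * U = 1) (F G : ℝ → ℝ) :
    matFun U d (fun x => F x * G x) = matFun U d F * matFun U d G := by
  have hassoc : U * diagonal (fun i => F (d i)) * Uᵀ * (U * diagonal (fun i => G (d i)) * Uᵀ) =
      U * (diagonal (fun i => F (d i)) * (Uᵀ * U) * diagonal (fun i => G (d i))) * Uᵀ := by
    simp only [Matrix.mul_assoc]
  rw [matFun, matFun, matFun, hassoc, hU, Matrix.mul_one, diagonal_mul_diagonal]

theorem dotProduct_matFun_mulVec (F : ℝ → ℝ) (x : Fin m → ℝ) :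
    x ⬝ᵥ (matFun U d F *ᵥ x) = ∑ i, F (d i) * (Uᵀ *ᵥ x) i ^ 2 := by
  rw [matFun, ← mulVec_mulVec, ← mulVec_mulVec, dotProduct_mulVec, ← mulVec_transpose]
  simp only [dotProduct, mulVec_diagonal]
  exact Finset.sum_congr rfl fun i _ => by ring

theorem dotProduct_matFun_mulVec_nonneg {F : ℝ → ℝ} (hF : ∀ i, 0 ≤ F (d i)) (x : Fin m → ℝ) :
    0 ≤ x ⬝ᵥ (matFun U d F *ᵥ x) := by
  rw [dotProduct_matFun_mulVec]
  exact Finset.sum_nonneg fun i _ => mul_nonneg (hF i) (sq_nonneg _)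

theorem matFun_eval_comp (hU : U * Uᵀ = 1) (P : ℝ[X]) (G : ℝ → ℝ) :
    matFun U d (fun x => P.eval (G x)) = aeval (matFun U d G) P := by
  have hU' : Uᵀ * U = 1 := mul_eq_one_comm.mp hU
  induction P using Polynomial.induction_on with
  | C r => simp only [eval_C, aeval_C, matFun_const U d hU]
  | add p q hp hq => simp only [eval_add, map_add, matFun_add, hp, hq]
  | monomial k r ih =>
    simp only [eval_mul, eval_pow, eval_C, eval_X, map_mul, map_pow, aeval_C, aeval_X,
      pow_succ, ← mul_assoc] at ih ⊢
    rw [matFun_mul U d hU' (fun x => r * G x ^ k), ih]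

theorem matFun_sq (hU : Uᵀ * U = 1) :
    matFun U d (fun x => x ^ 2) = (U * diagonal d * Uᵀ) ^ 2 := by
  rw [sq, show U * diagonal d * Uᵀ = matFun U d id from rfl, ← matFun_mul U d hU id id]
  exact matFun_congr U d fun i => sq _

theorem matFun_eq_aeval_sq (hU : U * Uᵀ = 1) {F : ℝ → ℝ} {P : ℝ[X]}
    (hP : ∀ i, P.eval (d i ^ 2) = F (d i)) :
    matFun U d F = aeval ((U * diagonal d * Uᵀ) ^ 2) P := by
  rw [← matFun_sq U d (mul_eq_one_comm.mp hU), ← matFun_eval_comp U d hU]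
  exact matFun_congr U d fun i => (hP i).symm

end MatFun

theorem matFun_mul_eq_mul_matFun {n : ℕ} {c : ℝ} {B U V : Matrix (Fin n) (Fin n) ℝ}
    {d e : Fin n → ℝ}
    (hU : U * Uᵀ = 1) (hV : V * Vᵀ = 1) (hd : ∀ i, 0 ≤ d i) (he : ∀ i, 0 ≤ e i)
    (hΘ : (U * diagonal d * Uᵀ) ^ 2 = c • (B * Bᵀ))
    (hΘs : (V * diagonal e * Vᵀ) ^ 2 = c • (Bᵀ * B)) (F : ℝ → ℝ) :
    matFun U d F * B = B * matFun V e F := by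
  classical
  set s : Finset ℝ := Finset.univ.image (fun i => d i ^ 2) ∪ Finset.univ.image (fun i => e i ^ 2)
  set P : ℝ[X] := Lagrange.interpolate s id (fun t => F (√t))
  have hP {x : ℝ} (hx : 0 ≤ x) (hs : x ^ 2 ∈ s) : P.eval (x ^ 2) = F x := by
    simpa only [id, Real.sqrt_sq hx] using
      Lagrange.eval_interpolate_at_node (fun t => F √t) Function.injective_id.injOn hs
  have hsemiconj : SemiconjBy B (c • (Bᵀ * B)) (c • (B * Bᵀ)) := by
    simp only [SemiconjBy, Matrix.mul_smul, Matrix.smul_mul, Matrix.mul_assoc]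
  rw [matFun_eq_aeval_sq U d hU fun i => hP (hd i) (by simp [s]),
    matFun_eq_aeval_sq V e hV fun i => hP (he i) (by simp [s]), hΘ, hΘs]
  exact (hsemiconj.aeval P).eq.symm

theorem dotProduct_matFun_eq_complete_square {n : ℕ} {c : ℝ} {B U V : Matrix (Fin n) (Fin n) ℝ}
    {d e : Fin n → ℝ} (hU : U * Uᵀ = 1) (hV : V * Vᵀ = 1) (hd : ∀ i, 0 ≤ d i)
    (he : ∀ i, 0 ≤ e i) (hΘ : (U * diagonal d * Uᵀ) ^ 2 = c • (B * Bᵀ))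
    (hΘs : (V * diagonal e * Vᵀ) ^ 2 = c • (Bᵀ * B)) (F : ℝ → ℝ) (Y a : Fin n → ℝ) :
    Y ⬝ᵥ (matFun U d (fun x => x ^ 2 * F x) *ᵥ Y) + 4 * c * (Y ⬝ᵥ ((matFun U d F * B) *ᵥ a))
        + 4 * c * (a ⬝ᵥ (matFun V e F *ᵥ a)) =
      c * ((Bᵀ *ᵥ Y + (2 : ℝ) • a) ⬝ᵥ (matFun V e F *ᵥ (Bᵀ *ᵥ Y + (2 : ℝ) • a))) := by
  have hcomm := matFun_mul_eq_mul_matFun hU hV hd he hΘ hΘs F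
  set H := matFun V e F
  set z := Bᵀ *ᵥ Y
  have hG : matFun U d (fun x => x ^ 2 * F x) = c • (B * H * Bᵀ) := by
    rw [matFun_congr U d (G := fun x => F x * x ^ 2) fun i => mul_comm _ _,
      matFun_mul U d (mul_eq_one_comm.mp hU), matFun_sq U d (mul_eq_one_comm.mp hU), hΘ,
      Matrix.mul_smul, ← Matrix.mul_assoc, hcomm]
  have hsq : Y ⬝ᵥ (matFun U d (fun x => x ^ 2 * F x) *ᵥ Y) = c * (z ⬝ᵥ (H *ᵥ z)) := by
    rw [hG, smul_mulVec, dotProduct_smul, smul_eq_mul, ← mulVec_mulVec, ← mulVec_mulVec,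
      dotProduct_mulVec, ← mulVec_transpose]
  have hcross : Y ⬝ᵥ ((matFun U d F * B) *ᵥ a) = z ⬝ᵥ (H *ᵥ a) := by
    rw [hcomm, ← mulVec_mulVec, dotProduct_mulVec, ← mulVec_transpose]
  have hsymm : a ⬝ᵥ (H *ᵥ z) = z ⬝ᵥ (H *ᵥ a) := by
    rw [dotProduct_mulVec, ← mulVec_transpose, transpose_matFun, dotProduct_comm]
  simp only [mulVec_add, mulVec_smul, add_dotProduct, dotProduct_add, smul_dotProduct,
    dotProduct_smul, smul_eq_mul]
  rw [hsq, hcross, hsymm]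
  ring

theorem coshSubOneDivXSinh_nonneg (x : ℝ) : 0 ≤ coshSubOneDivXSinh x := by
  unfold coshSubOneDivXSinh
  split_ifs
  · norm_num
  · have hx : 0 ≤ x * sinh x := by
      rcases le_total 0 x with hx | hx
      · exact mul_nonneg hx (sinh_nonneg_iff.mpr hx)
      · exact mul_nonneg_of_nonpos_of_nonpos hx (sinh_nonpos_iff.mpr hx)
    exact div_nonneg (sub_nonneg.mpr (one_le_cosh x)) hx

theorem xCoshDivSinh_eq (x : ℝ) :
    xCoshDivSinh x = 2⁻¹ * xCoshAddOneDivSinh x + 2⁻¹ * (x ^ 2 * coshSubOneDivXSinh x) := by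
  unfold xCoshDivSinh xCoshAddOneDivSinh coshSubOneDivXSinh
  split_ifs with hx
  · simp [hx]
  · have := sinh_ne_zero.mpr hx
    field_simp
    ring

/-- Proposition 4(i): Gaussian upper bound for the `n`-dimensional kernel `Φ(τ,Y,a,B)`. -/
theorem phi_n_dim_gaussian_bound {n : ℕ} (τ : ℝ) (hτ : 0 < τ)
    (Y a : Fin n → ℝ) (B U V : Matrix (Fin n) (Fin n) ℝ) (d e : Fin n → ℝ)
    (hU : U * Uᵀ = 1) (hV : V * Vᵀ = 1)
    (hd : ∀ i, 0 ≤ d i) (he : ∀ i, 0 ≤ e i)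
    (hΘ : (U * Matrix.diagonal d * Uᵀ) ^ 2 = (4 * τ ^ 2) • (B * Bᵀ))
    (hΘs : (V * Matrix.diagonal e * Vᵀ) ^ 2 = (4 * τ ^ 2) • (Bᵀ * B)) :
    (1 / Real.sqrt (4 * π * τ)) ^ n *
        Real.sqrt (Matrix.det (matFun U d xDivSinh)) *
        Real.exp
          (-(1 / (4 * τ)) * (Y ⬝ᵥ (matFun U d xCoshDivSinh *ᵥ Y))
            - 2 * τ * (Y ⬝ᵥ ((matFun U d coshSubOneDivXSinh * B) *ᵥ a))
            - 2 * τ * (a ⬝ᵥ (matFun V e coshSubOneDivXSinh *ᵥ a))) ≤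
      (1 / Real.sqrt (4 * π * τ)) ^ n *
        Real.sqrt (Matrix.det (matFun U d xDivSinh)) *
        Real.exp (-(1 / (8 * τ)) * (Y ⬝ᵥ (matFun U d xCoshAddOneDivSinh *ᵥ Y))) := by
  have hsplit : matFun U d xCoshDivSinh = (2⁻¹ : ℝ) • matFun U d xCoshAddOneDivSinh
      + (2⁻¹ : ℝ) • matFun U d (fun x => x ^ 2 * coshSubOneDivXSinh x) := by
    rw [funext xCoshDivSinh_eq, matFun_add, matFun_const_mul, matFun_const_mul]
  have hQ := dotProduct_matFun_eq_complete_square hU hV hd he hΘ hΘs coshSubOneDivXSinh Y a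
  have hQ_nonneg : 0 ≤ 4 * τ ^ 2 * _ :=
    mul_nonneg (by positivity) (dotProduct_matFun_mulVec_nonneg V e
      (fun i => coshSubOneDivXSinh_nonneg (e i)) (Bᵀ *ᵥ Y + (2 : ℝ) • a))
  rw [← hQ] at hQ_nonneg
  gcongr
  rw [hsplit, add_mulVec, smul_mulVec, smul_mulVec, dotProduct_add, dotProduct_smul,
    dotProduct_smul, smul_eq_mul, smul_eq_mul, ← sub_nonneg]
  convert div_nonneg hQ_nonneg (by positivity : (0 : ℝ) ≤ 8 * τ) using 1
  field_simp
  ring
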